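/- Let ψ_0 = D φ_{E_0} where E_0 = {N-m, N-m+1, ..., N}. Then ψ_0 ∈ ker D and ω_i ψ_0 = t^{c(i)} ψ_0 for 1 ≤ i ≤ N, where c(i) = N - m - i for 1 ≤ i ≤ N - m - 1 and c(i) = i - N for N - m ≤ i ≤ N. -/

import Mathlib

open Finset

noncomputable section

/-- The space of "fermionic" polynomials: formal linear combinations of
monomials `φ_E = θ_{i₁}⋯θ_{i_m}` indexed by finite sets `E` of indices. -/
abbrev SP (K : Type) [Field K] := Finset ℕ →₀ K

variable {K : Type} [Field K]

/-- basis monomial φ_E -/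
def phi (K : Type) [Field K] (E : Finset ℕ) : SP K := Finsupp.single E 1

/-- linear operator determined by its values on the basis {φ_E} -/
def opOf (v : Finset ℕ → SP K) : SP K →ₗ[K] SP K :=
  Finsupp.lsum K fun E => LinearMap.toSpanSingleton K (SP K) (v E)

/-- the image s_i E of E under the transposition swapping i, i+1 -/
def swapSet (i : ℕ) (E : Finset ℕ) : Finset ℕ := E.image (Equiv.swap i (i + 1))

/-- the Hecke algebra operator T_i acting on anti-commuting variables -/
def heckeT (t : K) (i : ℕ) : SP K →ₗ[K] SP K :=
  opOf fun E =>
    if i ∈ E then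
      (if i + 1 ∈ E then -phi K E else phi K (swapSet i E))
    else
      (if i + 1 ∈ E then (t - 1) • phi K E + t • phi K (swapSet i E)
       else t • phi K E)

/-- signed exterior multiplication θ̂_i -/
def thetaHat (K : Type) [Field K] (i : ℕ) : SP K →ₗ[K] SP K :=
  opOf fun E =>
    if i ∈ E then 0
    else ((-1 : K) ^ (E.filter (· < i)).card) • phi K (insert i E)

/-- formal fermionic derivative ∂_i -/
def fermD (K : Type) [Field K] (i : ℕ) : SP K →ₗ[K] SP K :=
  opOf fun E =>
    if i ∈ E then ((-1 : K) ^ (E.filter (· < i)).card) • phi K (E.erase i)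
    else 0

/-- M = Σ_{i=1}^N θ̂_i -/
def opM (K : Type) [Field K] (N : ℕ) : SP K →ₗ[K] SP K :=
  ∑ i ∈ Finset.Icc 1 N, thetaHat K i

/-- D = Σ_{i=1}^N t^{i-1} ∂_i -/
def opD (t : K) (N : ℕ) : SP K →ₗ[K] SP K :=
  ∑ i ∈ Finset.Icc 1 N, t ^ (i - 1) • fermD K i

/-- auxiliary recursion for the Jucys–Murphy operators (first arg = fuel) -/
def omegaAux (t : K) : ℕ → ℕ → SP K →ₗ[K] SP K
  | 0, _ => LinearMap.id
  | k + 1, i => t⁻¹ • (heckeT t i ∘ₗ omegaAux t k (i + 1) ∘ₗ heckeT t i)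

/-- Jucys–Murphy operator ω_i = t^{i-N} T_i ⋯ T_{N-1} T_{N-1} ⋯ T_i  (ω_N = 1),
via the recursion ω_N = 1, ω_i = t⁻¹ T_i ω_{i+1} T_i. -/
def omega (t : K) (N i : ℕ) : SP K →ₗ[K] SP K := omegaAux t (N - i) i

/-!
D commutes with T_i for 1 ≤ i < N (the pair t^{i-1} ∂_i + t^i ∂_{i+1} is T_i-invariant and the
other ∂_j commute with T_i), hence with every ω_i, and D² = 0 because the ∂_j anticommute.
Let E₀ = [b, N] with b = N - m. For i ≥ b every T_j with i ≤ j < N acts on φ_{E₀} by -1, so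
ω_i ψ₀ = t^{i-N} ψ₀; for i < b - 1 they act on ψ₀ by t, so each step down from b - 1 multiplies
the eigenvalue by t. At the boundary a = b - 1 write φ_{E₀} = ∂_a φ_F with F = [a, N]: downward
induction on k gives ω_k ∂_k φ_E = t ∂_k φ_E - (t - 1) t^{1-N} D_{[k,N]} φ_E whenever [k, N] ⊆ E,
and for k = a, E = F the correction term is a multiple of D φ_F, which D kills.
-/

theorem opOf_phi (v : Finset ℕ → SP K) (E : Finset ℕ) : opOf v (phi K E) = v E := by
  simp [opOf, phi]

theorem linearMap_ext_phi {f g : SP K →ₗ[K] SP K} (h : ∀ E, f (phi K E) = g (phi K E)) :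
    f = g :=
  Finsupp.lhom_ext' fun E => LinearMap.ext_ring (h E)

section SwapSet

variable {i k x : ℕ} {E : Finset ℕ}

theorem mem_swapSet : x ∈ swapSet i E ↔ Equiv.swap i (i + 1) x ∈ E := by
  simp [swapSet, Equiv.swap_apply_eq_iff]

theorem swapSet_erase (i x : ℕ) (E : Finset ℕ) :
    swapSet i (E.erase x) = (swapSet i E).erase (Equiv.swap i (i + 1) x) :=
  Finset.image_erase (Equiv.injective _) E x

theorem swapSet_eq_self (h : i ∈ E ↔ i + 1 ∈ E) : swapSet i E = E := by
  ext x
  rw [mem_swapSet]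
  rcases eq_or_ne x i with rfl | hi
  · simpa using h.symm
  rcases eq_or_ne x (i + 1) with rfl | hi'
  · simpa using h
  rw [Equiv.swap_apply_of_ne_of_ne hi hi']

theorem card_filter_lt_swapSet (hk : k ≠ i + 1) :
    #((swapSet i E).filter (· < k)) = #(E.filter (· < k)) := by
  have hswap : ∀ x, Equiv.swap i (i + 1) x < k ↔ x < k := by
    intro x
    rw [Equiv.swap_apply_def]
    split_ifs <;> omega
  rw [swapSet, Finset.filter_image, Finset.card_image_of_injective _ (Equiv.injective _)]
  simp only [hswap]

theorem card_filter_lt_succ_of_mem (h : k ∈ E) :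
    #(E.filter (· < k + 1)) = #(E.filter (· < k)) + 1 := by
  rw [← Finset.card_insert_of_notMem (s := E.filter (· < k)) (a := k) (by simp)]
  congr 1
  ext x
  simp only [Finset.mem_filter, Finset.mem_insert]
  grind

theorem card_filter_lt_succ_of_notMem (h : k ∉ E) :
    #(E.filter (· < k + 1)) = #(E.filter (· < k)) := by
  congr 1
  ext x
  simp only [Finset.mem_filter]
  grind

end SwapSet

section Phi

variable {t : K} {i k : ℕ} {E : Finset ℕ}

theorem heckeT_phi_of_mem_of_mem (h : i ∈ E) (h' : i + 1 ∈ E) :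
    heckeT t i (phi K E) = -phi K E := by
  rw [heckeT, opOf_phi, if_pos h, if_pos h']

theorem heckeT_phi_of_notMem_of_notMem (h : i ∉ E) (h' : i + 1 ∉ E) :
    heckeT t i (phi K E) = t • phi K E := by
  rw [heckeT, opOf_phi, if_neg h, if_neg h']

theorem heckeT_phi_of_mem_of_notMem (h : i ∈ E) (h' : i + 1 ∉ E) :
    heckeT t i (phi K E) = phi K (swapSet i E) := by
  rw [heckeT, opOf_phi, if_pos h, if_neg h']

theorem heckeT_phi_of_notMem_of_mem (h : i ∉ E) (h' : i + 1 ∈ E) :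
    heckeT t i (phi K E) = (t - 1) • phi K E + t • phi K (swapSet i E) := by
  rw [heckeT, opOf_phi, if_neg h, if_pos h']

theorem fermD_phi_of_mem (h : k ∈ E) :
    fermD K k (phi K E) = (-1 : K) ^ #(E.filter (· < k)) • phi K (E.erase k) := by
  rw [fermD, opOf_phi, if_pos h]

theorem fermD_phi_of_notMem (h : k ∉ E) : fermD K k (phi K E) = 0 := by
  rw [fermD, opOf_phi, if_neg h]

end Phi

theorem fermD_phi_Icc_self {a N : ℕ} (h : a ≤ N) :
    fermD K a (phi K (Icc a N)) = phi K (Icc (a + 1) N) := by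
  rw [fermD_phi_of_mem (by simp [h]), Finset.Icc_erase_left,
    Finset.filter_eq_empty_iff.2 (fun x hx => by simp at hx ⊢; omega),
    ← Finset.Icc_add_one_left_eq_Ioc, Finset.card_empty, pow_zero, one_smul]

theorem commute_heckeT_fermD (t : K) {i k : ℕ} (hi : k ≠ i) (hi' : k ≠ i + 1) :
    Commute (heckeT t i) (fermD K k) := by
  refine linearMap_ext_phi fun E => ?_
  have hk : k ∈ swapSet i E ↔ k ∈ E := by rw [mem_swapSet, Equiv.swap_apply_of_ne_of_ne hi hi']
  have hswap := swapSet_erase i k E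
  rw [Equiv.swap_apply_of_ne_of_ne hi hi'] at hswap
  have hcard := card_filter_lt_swapSet (E := E) hi'
  simp only [Module.End.mul_apply, heckeT, fermD, opOf_phi]
  by_cases hkE : k ∈ E <;> by_cases h1 : i ∈ E <;> by_cases h2 : i + 1 ∈ E <;>
    simp [hkE, h1, h2, hk, hswap, hcard, opOf_phi, Finset.mem_erase, hi.symm, hi'.symm, smul_smul,
      mul_comm]

section Pair

variable {t : K} {i : ℕ} {E : Finset ℕ}

theorem heckeT_fermD_phi_of_mem_of_mem (h : i ∈ E) (h' : i + 1 ∈ E) :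
    heckeT t i (fermD K i (phi K E)) =
      (t - 1) • fermD K i (phi K E) - t • fermD K (i + 1) (phi K E) := by
  have hswap : swapSet i (E.erase i) = E.erase (i + 1) := by
    rw [swapSet_erase, Equiv.swap_apply_left, swapSet_eq_self (by simp [h, h'])]
  rw [fermD_phi_of_mem h, fermD_phi_of_mem h', map_smul,
    heckeT_phi_of_notMem_of_mem (Finset.notMem_erase i E) (Finset.mem_erase.2 ⟨by omega, h'⟩),
    hswap, card_filter_lt_succ_of_mem h]
  module

theorem heckeT_fermD_succ_phi_of_mem_of_mem (h : i ∈ E) (h' : i + 1 ∈ E) :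
    heckeT t i (fermD K (i + 1) (phi K E)) = -fermD K i (phi K E) := by
  have hswap : swapSet i (E.erase (i + 1)) = E.erase i := by
    rw [swapSet_erase, Equiv.swap_apply_right, swapSet_eq_self (by simp [h, h'])]
  rw [fermD_phi_of_mem h, fermD_phi_of_mem h', map_smul,
    heckeT_phi_of_mem_of_notMem (Finset.mem_erase.2 ⟨by omega, h⟩) (Finset.notMem_erase _ E),
    hswap, card_filter_lt_succ_of_mem h]
  module

end Pair

def opDOn (t : K) (S : Finset ℕ) : Module.End K (SP K) :=
  ∑ j ∈ S, t ^ (j - 1) • fermD K j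

theorem opDOn_pair_phi (t : K) (i : ℕ) (E : Finset ℕ) :
    opDOn t {i, i + 1} (phi K E) =
      t ^ (i - 1) • fermD K i (phi K E) + t ^ i • fermD K (i + 1) (phi K E) := by
  simp [opDOn]

theorem commute_heckeT_opDOn_pair (t : K) {i : ℕ} (hi : 1 ≤ i) :
    Commute (heckeT t i) (opDOn t {i, i + 1}) := by
  have hpow : t ^ i = t ^ (i - 1) * t := by rw [← pow_succ, Nat.sub_add_cancel hi]
  refine linearMap_ext_phi fun E => ?_
  simp only [Module.End.mul_apply, opDOn_pair_phi, map_add, map_smul]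
  have hcard := card_filter_lt_swapSet (E := E) (k := i) (i := i) (by omega)
  by_cases h : i ∈ E <;> by_cases h' : i + 1 ∈ E
  · rw [heckeT_fermD_phi_of_mem_of_mem h h', heckeT_fermD_succ_phi_of_mem_of_mem h h',
      heckeT_phi_of_mem_of_mem h h', map_neg, opDOn_pair_phi, hpow]
    module
  · have hswap : (swapSet i E).erase (i + 1) = E.erase i := by
      have := swapSet_erase i i E
      rwa [Equiv.swap_apply_left, swapSet_eq_self (by simp [h']), eq_comm] at this
    have hi' : i ∉ swapSet i E := by rwa [mem_swapSet, Equiv.swap_apply_left]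
    have hi1 : i + 1 ∈ swapSet i E := by rwa [mem_swapSet, Equiv.swap_apply_right]
    rw [heckeT_phi_of_mem_of_notMem h h', opDOn_pair_phi, fermD_phi_of_mem h,
      fermD_phi_of_notMem h', fermD_phi_of_notMem hi', fermD_phi_of_mem hi1, map_smul,
      heckeT_phi_of_notMem_of_notMem (Finset.notMem_erase i E)
        (fun hc => h' (Finset.mem_of_mem_erase hc)),
      hswap, card_filter_lt_succ_of_notMem hi', hcard, hpow, map_zero]
    module
  · have hswap : (swapSet i E).erase i = E.erase (i + 1) := by
      have := swapSet_erase i (i + 1) E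
      rwa [Equiv.swap_apply_right, swapSet_eq_self (by simp [h]), eq_comm] at this
    have hi' : i ∈ swapSet i E := by rwa [mem_swapSet, Equiv.swap_apply_left]
    have hi1 : i + 1 ∉ swapSet i E := by rwa [mem_swapSet, Equiv.swap_apply_right]
    rw [heckeT_phi_of_notMem_of_mem h h', map_add, map_smul, map_smul, opDOn_pair_phi,
      opDOn_pair_phi, fermD_phi_of_notMem h, fermD_phi_of_mem h', fermD_phi_of_mem hi',
      fermD_phi_of_notMem hi1,
      map_smul, heckeT_phi_of_notMem_of_notMem (fun hc => h (Finset.mem_of_mem_erase hc))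
        (Finset.notMem_erase (i + 1) E),
      hswap, card_filter_lt_succ_of_notMem h, hcard, hpow, map_zero]
    module
  · rw [heckeT_phi_of_notMem_of_notMem h h', fermD_phi_of_notMem h, fermD_phi_of_notMem h',
      map_smul, opDOn_pair_phi, fermD_phi_of_notMem h, fermD_phi_of_notMem h']
    simp

theorem commute_heckeT_opDOn_of_notMem (t : K) {i : ℕ} {S : Finset ℕ} (h : i ∉ S)
    (h' : i + 1 ∉ S) : Commute (heckeT t i) (opDOn t S) :=
  Commute.sum_right _ _ _ fun _ hj =>
    (commute_heckeT_fermD t (ne_of_mem_of_not_mem hj h) (ne_of_mem_of_not_mem hj h')).smul_right _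

theorem commute_heckeT_opDOn (t : K) {i : ℕ} {S : Finset ℕ} (hi : 1 ≤ i)
    (hS : i ∈ S ↔ i + 1 ∈ S) : Commute (heckeT t i) (opDOn t S) := by
  by_cases h : i ∈ S
  · have hsub : {i, i + 1} ⊆ S := by simp [Finset.insert_subset_iff, h, hS.1 h]
    rw [opDOn, ← Finset.sum_sdiff hsub]
    exact (commute_heckeT_opDOn_of_notMem t (by simp) (by simp)).add_right
      (commute_heckeT_opDOn_pair t hi)
  · exact commute_heckeT_opDOn_of_notMem t h (hS.not.1 h)

theorem opDOn_Icc_eq_add {t : K} {k N : ℕ} (h : k ≤ N) :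
    opDOn t (Icc k N) = t ^ (k - 1) • fermD K k + opDOn t (Icc (k + 1) N) := by
  rw [opDOn, ← Finset.insert_Icc_add_one_left_eq_Icc h, Finset.sum_insert (by simp)]
  rfl

theorem opDOn_phi_of_subset (t : K) {S T E : Finset ℕ} (hST : S ⊆ T)
    (hE : ∀ j ∈ T, j ∈ E → j ∈ S) : opDOn t T (phi K E) = opDOn t S (phi K E) := by
  simp only [opDOn, LinearMap.sum_apply]
  refine (Finset.sum_subset hST fun j hjT hjS => ?_).symm
  rw [LinearMap.smul_apply, fermD_phi_of_notMem (fun hjE => hjS (hE j hjT hjE)), smul_zero]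

theorem fermD_mul_self (j : ℕ) : fermD K j * fermD K j = 0 := by
  refine linearMap_ext_phi fun E => ?_
  by_cases h : j ∈ E
  · rw [Module.End.mul_apply, fermD_phi_of_mem h, map_smul,
      fermD_phi_of_notMem (Finset.notMem_erase j E), smul_zero, LinearMap.zero_apply]
  · rw [Module.End.mul_apply, fermD_phi_of_notMem h, map_zero, LinearMap.zero_apply]

theorem fermD_anticomm_of_lt {j l : ℕ} (hjl : j < l) :
    fermD K j * fermD K l + fermD K l * fermD K j = 0 := by
  refine linearMap_ext_phi fun E => ?_
  simp only [LinearMap.add_apply, Module.End.mul_apply, LinearMap.zero_apply]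
  by_cases hj : j ∈ E <;> by_cases hl : l ∈ E
  · have hfilter : (E.erase l).filter (· < j) = E.filter (· < j) := by
      rw [Finset.filter_erase, Finset.erase_eq_of_notMem (by simp; omega)]
    have hcard : #((E.erase j).filter (· < l)) + 1 = #(E.filter (· < l)) := by
      rw [Finset.filter_erase, Finset.card_erase_add_one (by simp [hj, hjl])]
    rw [fermD_phi_of_mem hj, fermD_phi_of_mem hl, map_smul, map_smul,
      fermD_phi_of_mem (Finset.mem_erase.2 ⟨hjl.ne', hl⟩),
      fermD_phi_of_mem (Finset.mem_erase.2 ⟨hjl.ne, hj⟩), hfilter, ← hcard,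
      Finset.erase_right_comm, smul_smul, smul_smul, ← add_smul]
    convert zero_smul K _
    ring
  · rw [fermD_phi_of_notMem hl, fermD_phi_of_mem hj, map_zero, map_smul,
      fermD_phi_of_notMem (fun hc => hl (Finset.mem_of_mem_erase hc))]
    simp
  · rw [fermD_phi_of_notMem hj, fermD_phi_of_mem hl, map_zero, map_smul,
      fermD_phi_of_notMem (fun hc => hj (Finset.mem_of_mem_erase hc))]
    simp
  · rw [fermD_phi_of_notMem hj, fermD_phi_of_notMem hl, map_zero]
    simp

theorem fermD_anticomm (j l : ℕ) : fermD K j * fermD K l + fermD K l * fermD K j = 0 := by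
  rcases lt_trichotomy j l with h | rfl | h
  · exact fermD_anticomm_of_lt h
  · rw [fermD_mul_self, add_zero]
  · rw [add_comm]
    exact fermD_anticomm_of_lt h

theorem fermD_anticomm_opDOn (t : K) (j : ℕ) (S : Finset ℕ) :
    fermD K j * opDOn t S + opDOn t S * fermD K j = 0 := by
  simp only [opDOn, Finset.mul_sum, Finset.sum_mul, ← Finset.sum_add_distrib, mul_smul_comm,
    smul_mul_assoc, ← smul_add, fermD_anticomm, smul_zero, Finset.sum_const_zero]

theorem opDOn_mul_self (t : K) (S : Finset ℕ) : opDOn t S * opDOn t S = 0 := by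
  induction S using Finset.induction_on with
  | empty => simp [opDOn]
  | insert j S hj ih =>
    have hsplit : opDOn t (insert j S) = t ^ (j - 1) • fermD K j + opDOn t S :=
      Finset.sum_insert hj
    rw [hsplit, add_mul, mul_add, mul_add, ih, smul_mul_smul_comm, fermD_mul_self, smul_zero,
      zero_add, add_zero, smul_mul_assoc, mul_smul_comm, ← smul_add, fermD_anticomm_opDOn,
      smul_zero]

theorem opD_opD_apply (t : K) (N : ℕ) (x : SP K) : opD t N (opD t N x) = 0 := by
  rw [← Module.End.mul_apply, show opD t N = opDOn t (Icc 1 N) from rfl, opDOn_mul_self,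
    LinearMap.zero_apply]

theorem commute_heckeT_opD (t : K) {i N : ℕ} (hi : 1 ≤ i) (hiN : i + 1 ≤ N) :
    Commute (heckeT t i) (opD t N) :=
  commute_heckeT_opDOn t hi (by simp only [Finset.mem_Icc]; omega)

section JucysMurphy

variable {t : K} {N : ℕ}

theorem omega_of_le {i : ℕ} (h : N ≤ i) : omega t N i = 1 := by
  rw [omega, Nat.sub_eq_zero_of_le h]
  rfl

theorem omega_of_lt {i : ℕ} (h : i < N) :
    omega t N i = t⁻¹ • (heckeT t i * omega t N (i + 1) * heckeT t i) := by
  rw [omega, omega, show N - i = N - (i + 1) + 1 by omega]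
  rfl

theorem commute_omega_opD {i : ℕ} (hi : 1 ≤ i) : Commute (omega t N i) (opD t N) := by
  rcases le_total N i with hNi | hiN
  · rw [omega_of_le hNi]
    exact Commute.one_left _
  induction hiN using Nat.decreasingInduction with
  | self => rw [omega_of_le le_rfl]; exact Commute.one_left _
  | of_succ k hk ih =>
    have hT := commute_heckeT_opD t hi hk
    rw [omega_of_lt hk]
    exact ((hT.mul_left (ih (by omega))).mul_left hT).smul_left _

theorem omega_apply_of_heckeT_apply {μ c : K} {v : SP K} {i k : ℕ} (hik : i ≤ k) (hkN : k ≤ N)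
    (hT : ∀ j, i ≤ j → j < k → heckeT t j v = μ • v) (hω : omega t N k v = c • v) :
    omega t N i v = ((t⁻¹ * μ ^ 2) ^ (k - i) * c) • v := by
  induction hik using Nat.decreasingInduction with
  | self => rw [Nat.sub_self, pow_zero, one_mul, hω]
  | of_succ j hj ih =>
    rw [omega_of_lt (by omega), LinearMap.smul_apply, Module.End.mul_apply, Module.End.mul_apply,
      hT j le_rfl hj, map_smul, ih (fun l hl hlk => hT l (by omega) hlk), map_smul, map_smul,
      hT j le_rfl hj, smul_smul, smul_smul, smul_smul, show k - j = k - (j + 1) + 1 by omega,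
      pow_succ]
    congr 1
    ring

theorem omega_phi_of_Icc_subset {i : ℕ} {E : Finset ℕ} (hiN : i ≤ N) (hE : Icc i N ⊆ E) :
    omega t N i (phi K E) = t⁻¹ ^ (N - i) • phi K E := by
  have h := omega_apply_of_heckeT_apply (t := t) (μ := -1) (c := 1) (v := phi K E) hiN le_rfl
    (fun j hij hjN => by
      rw [heckeT_phi_of_mem_of_mem (hE (by simp; omega)) (hE (by simp; omega)), neg_one_smul])
    (by rw [omega_of_le le_rfl, one_smul]; rfl)
  simpa using h

end JucysMurphy

theorem omega_fermD_phi {t : K} (ht : t ≠ 0) {N k : ℕ} {E : Finset ℕ} (hk : 1 ≤ k)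
    (hkN : k ≤ N) (hE : Icc k N ⊆ E) :
    omega t N k (fermD K k (phi K E)) =
      t • fermD K k (phi K E) - ((t - 1) * t⁻¹ ^ (N - 1)) • opDOn t (Icc k N) (phi K E) := by
  induction hkN using Nat.decreasingInduction with
  | self =>
    rw [omega_of_le le_rfl, Finset.Icc_self, opDOn, Finset.sum_singleton, LinearMap.smul_apply,
      smul_smul, mul_assoc, ← mul_pow, inv_mul_cancel₀ ht, one_pow, mul_one, ← sub_smul]
    simp
  | of_succ k hkN ih =>
    have hkE : k ∈ E := hE (by simp; omega)
    have hk1E : k + 1 ∈ E := hE (by simp; omega)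
    have hT : heckeT t k (opDOn t (Icc k N) (phi K E)) = -opDOn t (Icc k N) (phi K E) := by
      rw [← Module.End.mul_apply,
        (commute_heckeT_opDOn t hk (by simp only [Finset.mem_Icc]; omega)).eq,
        Module.End.mul_apply, heckeT_phi_of_mem_of_mem hkE hk1E, map_neg]
    have hω : omega t N (k + 1) (fermD K k (phi K E)) =
        t⁻¹ ^ (N - (k + 1)) • fermD K k (phi K E) := by
      rw [fermD_phi_of_mem hkE, map_smul, omega_phi_of_Icc_subset hkN
        (fun x hx => Finset.mem_erase.2 ⟨by simp at hx; omega, hE (by simp at hx ⊢; omega)⟩),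
        smul_comm]
    have hY : opDOn t (Icc (k + 1) N) (phi K E) =
        opDOn t (Icc k N) (phi K E) - t ^ (k - 1) • fermD K k (phi K E) := by
      rw [opDOn_Icc_eq_add hkN.le, LinearMap.add_apply, LinearMap.smul_apply,
        add_sub_cancel_left]
    rw [omega_of_lt hkN, LinearMap.smul_apply, Module.End.mul_apply, Module.End.mul_apply,
      heckeT_fermD_phi_of_mem_of_mem hkE hk1E, map_sub, map_smul, map_smul, hω,
      ih (by omega) (fun x hx => hE (by simp at hx ⊢; omega)), hY]
    simp only [map_sub, map_smul, heckeT_fermD_phi_of_mem_of_mem hkE hk1E, hT,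
      heckeT_fermD_succ_phi_of_mem_of_mem hkE hk1E]
    obtain ⟨d, rfl⟩ : ∃ d, N = k + 1 + d := ⟨N - (k + 1), by omega⟩
    obtain ⟨j, rfl⟩ : ∃ j, k = j + 1 := ⟨k - 1, by omega⟩
    simp only [Nat.add_sub_cancel, show j + 1 + 1 + d - 1 = j + 1 + d by omega,
      show j + 1 + 1 + d - (j + 1 + 1) = d by omega, inv_pow]
    match_scalars <;> field_simp <;> ring

theorem omega_opD_phi_of_Icc_subset {t : K} {N i : ℕ} {E : Finset ℕ} (hi : 1 ≤ i) (hiN : i ≤ N)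
    (hE : Icc i N ⊆ E) : omega t N i (opD t N (phi K E)) = t⁻¹ ^ (N - i) • opD t N (phi K E) := by
  rw [← Module.End.mul_apply, (commute_omega_opD hi).eq, Module.End.mul_apply,
    omega_phi_of_Icc_subset hiN hE, map_smul]

theorem omega_opD_phi_Icc_succ {t : K} (ht : t ≠ 0) {N a : ℕ} (ha : 1 ≤ a) (haN : a ≤ N) :
    omega t N a (opD t N (phi K (Icc (a + 1) N))) = t • opD t N (phi K (Icc (a + 1) N)) := by
  have hD : opD t N (phi K (Icc a N)) = opDOn t (Icc a N) (phi K (Icc a N)) :=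
    opDOn_phi_of_subset t (Finset.Icc_subset_Icc_left ha) fun j _ hj => hj
  rw [← fermD_phi_Icc_self haN, ← Module.End.mul_apply, (commute_omega_opD ha).eq,
    Module.End.mul_apply, omega_fermD_phi ht ha haN subset_rfl, ← hD, map_sub, map_smul,
    map_smul, opD_opD_apply, smul_zero, sub_zero]

theorem omega_opD_phi_Icc_of_lt {t : K} (ht : t ≠ 0) {N b i : ℕ} (hi : 1 ≤ i) (hib : i < b)
    (hbN : b ≤ N) :
    omega t N i (opD t N (phi K (Icc b N))) = t ^ (b - i) • opD t N (phi K (Icc b N)) := by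
  obtain ⟨a, rfl⟩ : ∃ a, b = a + 1 := ⟨b - 1, by omega⟩
  have hT : ∀ j, i ≤ j → j < a →
      heckeT t j (opD t N (phi K (Icc (a + 1) N))) = t • opD t N (phi K (Icc (a + 1) N)) := by
    intro j hij hja
    rw [← Module.End.mul_apply, (commute_heckeT_opD t (by omega) (by omega)).eq,
      Module.End.mul_apply, heckeT_phi_of_notMem_of_notMem (by simp; omega) (by simp; omega),
      map_smul]
  rw [omega_apply_of_heckeT_apply (by omega) (by omega) hT
      (omega_opD_phi_Icc_succ ht (by omega) (by omega)),
    sq, ← mul_assoc, inv_mul_cancel₀ ht, one_mul, ← pow_succ, show a - i + 1 = a + 1 - i by omega]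

/-- ψ₀ = D φ_{E₀} with E₀ = {N-m, …, N} lies in ker D and is a
simultaneous ω_i-eigenvector: ω_i ψ₀ = t^{c(i)} ψ₀ with c(i) = N-m-i for
1 ≤ i ≤ N-m-1 and c(i) = i-N for N-m ≤ i ≤ N. -/
theorem psi0_eigenvector (K : Type) [Field K] (t : K) (ht : t ≠ 0) (N m : ℕ)
    (hm : m + 1 ≤ N) :
    opD t N (opD t N (phi K (Finset.Icc (N - m) N))) = 0 ∧
    ∀ i, 1 ≤ i → i ≤ N →
      omega t N i (opD t N (phi K (Finset.Icc (N - m) N))) =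
        (t ^ (if i + m < N then (N : ℤ) - m - i else (i : ℤ) - N)) •
          opD t N (phi K (Finset.Icc (N - m) N)) := by
  refine ⟨opD_opD_apply t N _, fun i hi hiN => ?_⟩
  split_ifs with h
  · rw [omega_opD_phi_Icc_of_lt ht hi (by omega) (by omega), ← zpow_natCast]
    congr 2
    omega
  · rw [omega_opD_phi_of_Icc_subset hi hiN (Finset.Icc_subset_Icc_left (by omega)), inv_pow,
      ← zpow_natCast, ← zpow_neg]
    congr 2
    omega
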